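/- If G is a finite weakly claw-free graph, then the game Z-domination number of G equals the game domination number of G, and the Staller-start game Z-domination number of G equals the Staller-start game domination number of G: γ_Zg(G) = γ_g(G) and γ'_Zg(G) = γ'_g(G). -/

import Mathlib

/-!
Only positions of the form `A = N[D]` arise. If `v` is legal there in the domination game
but not in the Z-game, then `v ∉ A` and `N(v) ⊆ A`. A neighbour `u` of `v` that is not a claw
center satisfies `N(u) ⊆ A ∪ {v}`: otherwise an undominated `w ∈ N(u) \ {v}`, together with `v`
and a vertex `d ∈ D` dominating `u`, would form a claw at `u`. So `u` is Z-legal and playing it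
also leads to `A ∪ {v}`. Both games therefore have the same successor positions everywhere,
and their values agree by induction on the number of undominated vertices.
-/

open Finset

open scoped Classical

noncomputable section

namespace ZGamePaper

variable {V : Type*} {W : Type*}

/-- The closed neighborhood `N[v]` of a vertex as a `Finset`. -/
def closedNF [Fintype V] (G : SimpleGraph V) (v : V) : Finset V :=
  Finset.univ.filter fun x => x = v ∨ G.Adj v x

/-- The open neighborhood `N(v)` of a vertex as a `Finset`. -/
def openNF [Fintype V] (G : SimpleGraph V) (v : V) : Finset V :=
  Finset.univ.filter fun x => G.Adj v x

lemma openNF_subset_closedNF [Fintype V] (G : SimpleGraph V) (v : V) :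
    openNF G v ⊆ closedNF G v := by
  intro x hx
  simp only [openNF, closedNF, mem_filter] at hx ⊢
  exact ⟨hx.1, Or.inr hx.2⟩

lemma measure_dec [Fintype V] {A C : Finset V} {w : V} (hw : w ∈ C) (hwA : w ∉ A) :
    (Finset.univ \ (A ∪ C)).card < (Finset.univ \ A).card := by
  apply Finset.card_lt_card
  rw [Finset.ssubset_iff_of_subset
    (Finset.sdiff_subset_sdiff (le_refl _) Finset.subset_union_left)]
  refine ⟨w, ?_, ?_⟩
  · simp [hwA]
  · simp [hw]

/-! ### The Z-domination game -/

/-- The set of legal moves in the Z-domination game, given the set `A` of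
already dominated vertices: a vertex `v` is legal if `N(v) ⊄ A`. -/
def zLegal [Fintype V] (G : SimpleGraph V) (A : Finset V) : Finset V :=
  Finset.univ.filter fun v => ¬ openNF G v ⊆ A

lemma zLegal_dec [Fintype V] (G : SimpleGraph V) (A : Finset V) {v : V}
    (hv : v ∈ zLegal G A) :
    (Finset.univ \ (A ∪ closedNF G v)).card < (Finset.univ \ A).card := by
  simp only [zLegal, mem_filter] at hv
  obtain ⟨w, hw1, hw2⟩ := Finset.not_subset.mp hv.2
  exact measure_dec (openNF_subset_closedNF G v hw1) hw2

/-- The optimal number of remaining moves in the Z-domination game played on `G`,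
where `A` is the set of already dominated vertices and `turn = true` iff it is
Dominator's (the minimizer's) turn. -/
def zVal [Fintype V] (G : SimpleGraph V) (turn : Bool) (A : Finset V) : ℕ :=
  if h : (zLegal G A).Nonempty then
    if turn then
      1 + ((zLegal G A).attach.inf' h.attach fun v => zVal G false (A ∪ closedNF G v.1))
    else
      1 + ((zLegal G A).attach.sup' h.attach fun v => zVal G true (A ∪ closedNF G v.1))
  else 0
termination_by (Finset.univ \ A).card
decreasing_by
  · exact zLegal_dec G A v.2
  · exact zLegal_dec G A v.2

/-- The game Z-domination number `γ_Zg(G)` (Dominator starts). -/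
def gammaZg [Fintype V] (G : SimpleGraph V) : ℕ := zVal G true ∅

/-- The Staller-start game Z-domination number `γ'_Zg(G)`. -/
def gammaZg' [Fintype V] (G : SimpleGraph V) : ℕ := zVal G false ∅

/-! ### The (ordinary) domination game -/

/-- The set of legal moves in the domination game: `v` is legal if `N[v] ⊄ A`.
This set is nonempty if and only if `A ≠ V(G)`. -/
def dLegal [Fintype V] (G : SimpleGraph V) (A : Finset V) : Finset V :=
  Finset.univ.filter fun v => ¬ closedNF G v ⊆ A

lemma dLegal_dec [Fintype V] (G : SimpleGraph V) (A : Finset V) {v : V}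
    (hv : v ∈ dLegal G A) :
    (Finset.univ \ (A ∪ closedNF G v)).card < (Finset.univ \ A).card := by
  simp only [dLegal, mem_filter] at hv
  obtain ⟨w, hw1, hw2⟩ := Finset.not_subset.mp hv.2
  exact measure_dec hw1 hw2

/-- The optimal number of remaining moves in the domination game on `G`, with `A`
the set of already dominated vertices; `turn = true` iff it is Dominator's turn.
(There is no legal move iff `A = V(G)`.) -/
def dVal [Fintype V] (G : SimpleGraph V) (turn : Bool) (A : Finset V) : ℕ :=
  if h : (dLegal G A).Nonempty then
    if turn then
      1 + ((dLegal G A).attach.inf' h.attach fun v => dVal G false (A ∪ closedNF G v.1))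
    else
      1 + ((dLegal G A).attach.sup' h.attach fun v => dVal G true (A ∪ closedNF G v.1))
  else 0
termination_by (Finset.univ \ A).card
decreasing_by
  · exact dLegal_dec G A v.2
  · exact dLegal_dec G A v.2

/-- The game domination number `γ_g(G)` (Dominator starts). -/
def gammaGg [Fintype V] (G : SimpleGraph V) : ℕ := dVal G true ∅

/-- The Staller-start game domination number `γ'_g(G)`. -/
def gammaGg' [Fintype V] (G : SimpleGraph V) : ℕ := dVal G false ∅

/-! ### The total domination game -/

/-- The set of legal moves in the total domination game: `v` is legal if `N(v) ⊄ B`.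
For a graph without isolated vertices this set is nonempty iff `B ≠ V(G)`. -/
def tLegal [Fintype V] (G : SimpleGraph V) (B : Finset V) : Finset V :=
  Finset.univ.filter fun v => ¬ openNF G v ⊆ B

lemma tLegal_dec [Fintype V] (G : SimpleGraph V) (B : Finset V) {v : V}
    (hv : v ∈ tLegal G B) :
    (Finset.univ \ (B ∪ openNF G v)).card < (Finset.univ \ B).card := by
  simp only [tLegal, mem_filter] at hv
  obtain ⟨w, hw1, hw2⟩ := Finset.not_subset.mp hv.2
  exact measure_dec hw1 hw2

/-- The optimal number of remaining moves in the total domination game on `G`,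
with `B` the set of already totally dominated vertices; `turn = true` iff it is
Dominator's turn. -/
def tVal [Fintype V] (G : SimpleGraph V) (turn : Bool) (B : Finset V) : ℕ :=
  if h : (tLegal G B).Nonempty then
    if turn then
      1 + ((tLegal G B).attach.inf' h.attach fun v => tVal G false (B ∪ openNF G v.1))
    else
      1 + ((tLegal G B).attach.sup' h.attach fun v => tVal G true (B ∪ openNF G v.1))
  else 0
termination_by (Finset.univ \ B).card
decreasing_by
  · exact tLegal_dec G B v.2
  · exact tLegal_dec G B v.2

/-- The game total domination number `γ_tg(G)` (Dominator starts). -/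
def gammaTg [Fintype V] (G : SimpleGraph V) : ℕ := tVal G true ∅

/-! ### The L-domination game -/

/-- The set of legal moves in the L-domination game, given the set `P` of vertices
played so far: `v` is legal if `v ∉ P` and `N[v] ⊄ N(P)`. -/
def lLegal [Fintype V] (G : SimpleGraph V) (P : Finset V) : Finset V :=
  Finset.univ.filter fun v => v ∉ P ∧ ¬ closedNF G v ⊆ P.biUnion (openNF G)

lemma lLegal_dec [Fintype V] (G : SimpleGraph V) (P : Finset V) {v : V}
    (hv : v ∈ lLegal G P) :
    (Finset.univ \ insert v P).card < (Finset.univ \ P).card := by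
  simp only [lLegal, mem_filter] at hv
  apply Finset.card_lt_card
  rw [Finset.ssubset_iff_of_subset
    (Finset.sdiff_subset_sdiff (le_refl _) (Finset.subset_insert _ _))]
  exact ⟨v, by simp [hv.2.1], by simp⟩

/-- The optimal number of remaining moves in the L-domination game on `G`, with `P`
the set of vertices played so far; `turn = true` iff it is Dominator's turn. -/
def lVal [Fintype V] (G : SimpleGraph V) (turn : Bool) (P : Finset V) : ℕ :=
  if h : (lLegal G P).Nonempty then
    if turn then
      1 + ((lLegal G P).attach.inf' h.attach fun v => lVal G false (insert v.1 P))
    else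
      1 + ((lLegal G P).attach.sup' h.attach fun v => lVal G true (insert v.1 P))
  else 0
termination_by (Finset.univ \ P).card
decreasing_by
  · exact lLegal_dec G P v.2
  · exact lLegal_dec G P v.2

/-- The game L-domination number `γ_Lg(G)` (Dominator starts). -/
def gammaLg [Fintype V] (G : SimpleGraph V) : ℕ := lVal G true ∅

/-! ### Domination number and related notions -/

/-- The domination number `γ(G)`: the minimum size of a set `S` with `N[S] = V(G)`. -/
def gammaNum [Fintype V] (G : SimpleGraph V) : ℕ :=
  sInf {k | ∃ S : Finset V, S.card = k ∧ ∀ v : V, ∃ u ∈ S, v ∈ closedNF G u}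

/-- The partially dominated graph `G|A` has a Z-configuration if there is an
undominated vertex `v` all of whose neighbors are dominated, while every neighbor
of `v` has at least two undominated neighbors. -/
def HasZConfig [Fintype V] (G : SimpleGraph V) (A : Finset V) : Prop :=
  ∃ v : V, v ∉ A ∧ openNF G v ⊆ A ∧ ∀ u ∈ openNF G v, 2 ≤ (openNF G u \ A).card

/-- A graph without isolated vertices is Z-insensitive if for every `D ⊆ V(G)` the
partially dominated graph `G|N[D]` has no Z-configuration. -/
def ZInsensitive [Fintype V] (G : SimpleGraph V) : Prop :=
  (∀ v : V, ∃ u : V, G.Adj v u) ∧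
    ∀ D : Finset V, ¬ HasZConfig G (D.biUnion (closedNF G))

/-- A vertex `w` is the center of a claw if it has three pairwise non-adjacent
neighbors. -/
def IsClawCenter (G : SimpleGraph V) (w : V) : Prop :=
  ∃ a b c : V, G.Adj w a ∧ G.Adj w b ∧ G.Adj w c ∧ a ≠ b ∧ a ≠ c ∧ b ≠ c ∧
    ¬ G.Adj a b ∧ ¬ G.Adj a c ∧ ¬ G.Adj b c

/-- A graph is weakly claw-free if every vertex has a neighbor that is not the
center of a claw. -/
def WeaklyClawFree (G : SimpleGraph V) : Prop :=
  ∀ v : V, ∃ u : V, G.Adj v u ∧ ¬ IsClawCenter G u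

/-- The lexicographic product `G ∘ H`. -/
def lexProd (G : SimpleGraph V) (H : SimpleGraph W) : SimpleGraph (V × W) where
  Adj p q := G.Adj p.1 q.1 ∨ (p.1 = q.1 ∧ H.Adj p.2 q.2)
  symm := by
    constructor
    rintro p q (h | ⟨h1, h2⟩)
    · exact Or.inl h.symm
    · exact Or.inr ⟨h1.symm, h2.symm⟩
  loopless := by
    constructor
    rintro p (h | ⟨_, h⟩)
    · exact G.loopless.irrefl _ h
    · exact H.loopless.irrefl _ h

section

variable [Fintype V] {G : SimpleGraph V}

@[simp]
lemma mem_closedNF {v x : V} : x ∈ closedNF G v ↔ x = v ∨ G.Adj v x := by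
  simp [closedNF]

@[simp]
lemma mem_openNF {v x : V} : x ∈ openNF G v ↔ G.Adj v x := by
  simp [openNF]

lemma closedNF_eq_insert_openNF (v : V) : closedNF G v = insert v (openNF G v) := by
  ext; simp

lemma zLegal_subset_dLegal (A : Finset V) : zLegal G A ⊆ dLegal G A := by
  intro v hv
  simp only [zLegal, dLegal, mem_filter, mem_univ, true_and] at hv ⊢
  exact fun hsub => hv ((openNF_subset_closedNF G v).trans hsub)

lemma zVal_eq_image (t : Bool) (A : Finset V) :
    zVal G t A =
      if h : (zLegal G A).Nonempty then
        1 + if t then ((zLegal G A).image (A ∪ closedNF G ·)).inf' (h.image _) (zVal G false)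
          else ((zLegal G A).image (A ∪ closedNF G ·)).sup' (h.image _) (zVal G true)
      else 0 := by
  rw [zVal]
  split_ifs
  all_goals simp only [← attach_image_val (s := zLegal G A), image_image, inf'_image, sup'_image]
  all_goals rfl

lemma dVal_eq_image (t : Bool) (A : Finset V) :
    dVal G t A =
      if h : (dLegal G A).Nonempty then
        1 + if t then ((dLegal G A).image (A ∪ closedNF G ·)).inf' (h.image _) (dVal G false)
          else ((dLegal G A).image (A ∪ closedNF G ·)).sup' (h.image _) (dVal G true)
      else 0 := by
  rw [dVal]
  split_ifs
  all_goals simp only [← attach_image_val (s := dLegal G A), image_image, inf'_image, sup'_image]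
  all_goals rfl

lemma zVal_eq_dVal_of_image_eq {A : Finset V}
    (hpos : (zLegal G A).image (A ∪ closedNF G ·) = (dLegal G A).image (A ∪ closedNF G ·))
    (hsucc : ∀ v ∈ dLegal G A, ∀ t, zVal G t (A ∪ closedNF G v) = dVal G t (A ∪ closedNF G v))
    (t : Bool) : zVal G t A = dVal G t A := by
  have hval : ∀ B ∈ (dLegal G A).image (A ∪ closedNF G ·), ∀ t, zVal G t B = dVal G t B := by
    simp only [mem_image, forall_exists_index, and_imp, forall_apply_eq_imp_iff₂]
    exact hsucc
  rw [zVal_eq_image, dVal_eq_image]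
  by_cases h : (dLegal G A).Nonempty
  · have hz : (zLegal G A).Nonempty := image_nonempty.1 (hpos ▸ h.image _)
    rw [dif_pos hz, dif_pos h]
    cases t
    · exact congrArg (1 + ·) (sup'_congr (hz.image _) hpos fun B hB => hval B (hpos ▸ hB) true)
    · exact congrArg (1 + ·) (inf'_congr (hz.image _) hpos fun B hB => hval B (hpos ▸ hB) false)
  · have hz : ¬ (zLegal G A).Nonempty := fun hz => h (image_nonempty.1 (hpos ▸ hz.image _))
    rw [dif_neg hz, dif_neg h]

lemma openNF_subset_insert_of_not_isClawCenter {D : Finset V} {u v : V}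
    (hu : ¬ IsClawCenter G u) (huv : G.Adj u v) (hv : v ∉ D.biUnion (closedNF G))
    (hNv : openNF G v ⊆ D.biUnion (closedNF G)) :
    openNF G u ⊆ insert v (D.biUnion (closedNF G)) := by
  intro w huw
  rw [mem_insert]
  by_contra! hw
  obtain ⟨hwv, hw⟩ := hw
  obtain ⟨d, hd, hud⟩ := mem_biUnion.1 (hNv (mem_openNF.2 huv.symm))
  have hdA : closedNF G d ⊆ D.biUnion (closedNF G) := subset_biUnion_of_mem _ hd
  rcases mem_closedNF.1 hud with rfl | hdu
  · exact hv (hdA (mem_closedNF.2 (Or.inr huv)))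
  · have hd : d ∈ D.biUnion (closedNF G) := hdA (mem_closedNF.2 (Or.inl rfl))
    exact hu ⟨v, w, d, huv, mem_openNF.1 huw, hdu.symm, Ne.symm hwv,
      (ne_of_mem_of_not_mem hd hv).symm, (ne_of_mem_of_not_mem hd hw).symm,
      fun hvw => hw (hNv (mem_openNF.2 hvw)),
      fun hvd => hv (hdA (mem_closedNF.2 (Or.inr hvd.symm))),
      fun hwd => hw (hdA (mem_closedNF.2 (Or.inr hwd.symm)))⟩

lemma exists_zLegal_union_closedNF_eq (h : WeaklyClawFree G) (D : Finset V) {v : V}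
    (hv : v ∈ dLegal G (D.biUnion (closedNF G))) :
    ∃ u ∈ zLegal G (D.biUnion (closedNF G)),
      D.biUnion (closedNF G) ∪ closedNF G u = D.biUnion (closedNF G) ∪ closedNF G v := by
  set A := D.biUnion (closedNF G)
  by_cases hvz : v ∈ zLegal G A
  · exact ⟨v, hvz, rfl⟩
  have hNv : openNF G v ⊆ A := by simpa [zLegal] using hvz
  have hvA : v ∉ A := fun hvA =>
    (mem_filter.1 hv).2 (closedNF_eq_insert_openNF v ▸ insert_subset hvA hNv)
  obtain ⟨u, hvu, hu⟩ := h v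
  have hNu := openNF_subset_insert_of_not_isClawCenter hu hvu.symm hvA hNv
  have huA : u ∈ A := hNv (mem_openNF.2 hvu)
  have hv_eq : A ∪ closedNF G v = insert v A := by
    rw [closedNF_eq_insert_openNF, union_insert, union_eq_left.2 hNv]
  have hu_eq : A ∪ closedNF G u = insert v A := by
    rw [closedNF_eq_insert_openNF, union_insert, insert_eq_of_mem (mem_union_left _ huA)]
    exact Subset.antisymm (union_subset (subset_insert _ _) hNu)
      (insert_subset (mem_union_right _ (mem_openNF.2 hvu.symm)) subset_union_left)
  refine ⟨u, ?_, hu_eq.trans hv_eq.symm⟩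
  simp only [zLegal, mem_filter, mem_univ, true_and]
  exact fun hNuA => hvA (hNuA (mem_openNF.2 hvu.symm))

lemma image_zLegal_eq_image_dLegal (h : WeaklyClawFree G) (D : Finset V) :
    (zLegal G (D.biUnion (closedNF G))).image (D.biUnion (closedNF G) ∪ closedNF G ·) =
      (dLegal G (D.biUnion (closedNF G))).image (D.biUnion (closedNF G) ∪ closedNF G ·) := by
  refine Subset.antisymm (image_subset_image (zLegal_subset_dLegal _)) fun B hB => ?_
  obtain ⟨v, hv, rfl⟩ := mem_image.1 hB
  obtain ⟨u, hu, huv⟩ := exists_zLegal_union_closedNF_eq h D hv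
  exact mem_image.2 ⟨u, hu, huv⟩

lemma zVal_biUnion_closedNF_eq_dVal (h : WeaklyClawFree G) (D : Finset V) (t : Bool) :
    zVal G t (D.biUnion (closedNF G)) = dVal G t (D.biUnion (closedNF G)) := by
  induction hn : (univ \ D.biUnion (closedNF G)).card using Nat.strong_induction_on
    generalizing D t with
  | _ n ih =>
  refine zVal_eq_dVal_of_image_eq (image_zLegal_eq_image_dLegal h D) (fun v hv t' => ?_) t
  have hins : D.biUnion (closedNF G) ∪ closedNF G v = (insert v D).biUnion (closedNF G) := by
    rw [biUnion_insert, union_comm]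
  rw [hins]
  exact ih _ (hn ▸ hins ▸ dLegal_dec G _ hv) _ _ rfl

end

/-- If `G` is a finite weakly claw-free graph, then
`γ_Zg(G) = γ_g(G)` and `γ'_Zg(G) = γ'_g(G)`. -/
theorem weaklyClawFree_gammaZg_eq_gammaGg {V : Type*} [Fintype V] (G : SimpleGraph V)
    (h : WeaklyClawFree G) :
    gammaZg G = gammaGg G ∧ gammaZg' G = gammaGg' G := by
  have hval := zVal_biUnion_closedNF_eq_dVal h ∅
  rw [biUnion_empty] at hval
  exact ⟨hval true, hval false⟩

end ZGamePaper
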